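/- Let C₁, C₂ > 2 and ℓ = [[det h, 0],[n, h]] ∈ L with d(ℓ⁻¹E₁, E₁^⊥) > 1/C₁. Then for any unit vector v with Rv in the attracting region b(f_ℓ, 1/C₂), one has ‖Π_{E₁^⊥}(ℓv)‖ ≥ ‖h‖/C₂; moreover, for any two distinct points x, x' ∈ b(f_ℓ, 1/C₂), d(π_{E₁^⊥}ℓ(x), π_{E₁^⊥}ℓ(x'))/d(x,x') ≤ 2C₁C₂²/‖h‖². -/
import Mathlib


/- STATEMENT 9: Let C₁, C₂ > 2 and ℓ = [[det h, 0],[n, h]] ∈ L with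
d(ℓ⁻¹E₁, E₁^⊥) > 1/C₁. For any unit vector v with ℝv in the attracting region
b(f_ℓ, 1/C₂) = {ℝv : |f_ℓ(v)| ≥ ‖f_ℓ‖·‖v‖/C₂}, one has ‖Π_{E₁^⊥}(ℓv)‖ ≥ ‖h‖/C₂;
moreover for distinct points x, x' ∈ b(f_ℓ, 1/C₂),
d(π_{E₁^⊥}ℓ(x), π_{E₁^⊥}ℓ(x'))/d(x,x') ≤ 2C₁C₂²/‖h‖². -/

noncomputable section

/-- Euclidean norm of a vector. -/
def en {m : ℕ} (v : Fin m → ℝ) : ℝ := Real.sqrt (∑ i, v i ^ 2)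

/-- Euclidean inner product. -/
def ip {m : ℕ} (v w : Fin m → ℝ) : ℝ := ∑ i, v i * w i

/-- Projective distance `d(ℝv, ℝw) = ‖v ∧ w‖ / (‖v‖ ‖w‖)`. -/
def pd {m : ℕ} (v w : Fin m → ℝ) : ℝ :=
  Real.sqrt (en v ^ 2 * en w ^ 2 - ip v w ^ 2) / (en v * en w)

/-- The element `ℓ = [[det h, 0],[n, h]]` of the group `L ⊂ SL₃(ℝ)`. -/
def Lmat (h : Matrix (Fin 2) (Fin 2) ℝ) (n : Fin 2 → ℝ) :
    Matrix (Fin 3) (Fin 3) ℝ :=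
  !![h.det, 0, 0; n 0, h 0 0, h 0 1; n 1, h 1 0, h 1 1]

/-- Operator norm of a 2×2 matrix (supremum of `‖h x‖` over unit vectors). -/
def opn (h : Matrix (Fin 2) (Fin 2) ℝ) : ℝ :=
  sSup ((fun x => en (h.mulVec x)) '' {x : Fin 2 → ℝ | en x = 1})

/-- The linear form `f_ℓ(v) = f_h(Π_{ℓ⁻¹E₁,E₁^⊥}(v))`, where
`f_h = ⟨·, u⟩` is the norm-one linear form on `E₁^⊥ ≅ ℝ²` with kernel `H_h⁻`
(`u` being a unit top right-singular vector of `h`), and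
`Π_{ℓ⁻¹E₁,E₁^⊥}(a,b,c) = (b,c) + a·h⁻¹n`. -/
def flform (h : Matrix (Fin 2) (Fin 2) ℝ) (nv u : Fin 2 → ℝ) (v : Fin 3 → ℝ) : ℝ :=
  ip (fun i : Fin 2 => v i.succ + v 0 * h⁻¹.mulVec nv i) u

/-- The norm `‖f_ℓ‖` of the linear form `f_ℓ`. -/
def flnorm (h : Matrix (Fin 2) (Fin 2) ℝ) (nv u : Fin 2 → ℝ) : ℝ :=
  Real.sqrt (1 + ip (h⁻¹.mulVec nv) u ^ 2)

lemma ip_self_nonneg {m : ℕ} (v : Fin m → ℝ) : 0 ≤ ip v v :=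
  Finset.sum_nonneg fun i _ => mul_self_nonneg _

lemma en_eq {m : ℕ} (v : Fin m → ℝ) : en v = Real.sqrt (ip v v) := by
  unfold en ip; congr 1; exact Finset.sum_congr rfl fun i _ => by ring

lemma en_nonneg {m : ℕ} (v : Fin m → ℝ) : 0 ≤ en v := Real.sqrt_nonneg _

lemma en_sq {m : ℕ} (v : Fin m → ℝ) : en v ^ 2 = ip v v := by
  rw [en_eq, Real.sq_sqrt (ip_self_nonneg v)]

lemma en_pos {m : ℕ} {v : Fin m → ℝ} (hv : v ≠ 0) : 0 < en v := by
  rcases Function.ne_iff.1 hv with ⟨i, hi⟩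
  have h1 : 0 < ip v v := by
    have : v i * v i ≤ ip v v :=
      Finset.single_le_sum (fun j _ => mul_self_nonneg (v j)) (Finset.mem_univ i)
    nlinarith [mul_self_pos.2 hi]
  rw [en_eq]; exact Real.sqrt_pos.2 h1

lemma ip_comm {m : ℕ} (v w : Fin m → ℝ) : ip v w = ip w v := by
  unfold ip; exact Finset.sum_congr rfl fun i _ => mul_comm _ _

lemma ip_add_left {m : ℕ} (a b w : Fin m → ℝ) : ip (a + b) w = ip a w + ip b w := by
  unfold ip; rw [← Finset.sum_add_distrib]; exact Finset.sum_congr rfl fun i _ => by simp [add_mul]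

lemma ip_smul_left {m : ℕ} (c : ℝ) (a w : Fin m → ℝ) : ip (c • a) w = c * ip a w := by
  unfold ip; rw [Finset.mul_sum]; exact Finset.sum_congr rfl fun i _ => by simp [mul_assoc]

lemma ip_sub_left {m : ℕ} (a b w : Fin m → ℝ) : ip (a - b) w = ip a w - ip b w := by
  have := ip_add_left a (-b) w
  have h2 := ip_smul_left (-1) b w
  simp at h2
  simpa [sub_eq_add_neg, h2] using this

lemma ip_add_right {m : ℕ} (w a b : Fin m → ℝ) : ip w (a + b) = ip w a + ip w b := by
  rw [ip_comm, ip_add_left, ip_comm a, ip_comm b]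

lemma ip_smul_right {m : ℕ} (c : ℝ) (w a : Fin m → ℝ) : ip w (c • a) = c * ip w a := by
  rw [ip_comm, ip_smul_left, ip_comm]

lemma ip_zero_right {m : ℕ} (w : Fin m → ℝ) : ip w 0 = 0 := by simp [ip]

lemma en_smul {m : ℕ} (c : ℝ) (v : Fin m → ℝ) : en (c • v) = |c| * en v := by
  rw [en_eq, en_eq]
  have : ip (c • v) (c • v) = c ^ 2 * ip v v := by rw [ip_smul_left, ip_smul_right]; ring
  rw [this, Real.sqrt_mul (sq_nonneg c), Real.sqrt_sq_eq_abs]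

lemma en2_sq (v : Fin 2 → ℝ) : en v ^ 2 = v 0 ^ 2 + v 1 ^ 2 := by
  have h : (0:ℝ) ≤ v 0 ^ 2 + v 1 ^ 2 := by positivity
  rw [en, Fin.sum_univ_two, Real.sq_sqrt h]

lemma en3_sq (v : Fin 3 → ℝ) : en v ^ 2 = v 0 ^ 2 + v 1 ^ 2 + v 2 ^ 2 := by
  have h : (0:ℝ) ≤ v 0 ^ 2 + v 1 ^ 2 + v 2 ^ 2 := by positivity
  rw [en, Fin.sum_univ_three, Real.sq_sqrt h]

lemma ip2 (a b : Fin 2 → ℝ) : ip a b = a 0 * b 0 + a 1 * b 1 := Fin.sum_univ_two _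
lemma ip3 (a b : Fin 3 → ℝ) : ip a b = a 0 * b 0 + a 1 * b 1 + a 2 * b 2 := Fin.sum_univ_three _

lemma mulVec2 (A : Matrix (Fin 2) (Fin 2) ℝ) (x : Fin 2 → ℝ) (i : Fin 2) :
    A.mulVec x i = A i 0 * x 0 + A i 1 * x 1 := by
  simp [Matrix.mulVec, dotProduct, Fin.sum_univ_two]

lemma opn_ub (h : Matrix (Fin 2) (Fin 2) ℝ) (x : Fin 2 → ℝ) (hx : en x = 1) :
    en (h.mulVec x) ≤ opn h := by
  apply le_csSup
  · refine ⟨Real.sqrt (h 0 0 ^ 2 + h 0 1 ^ 2 + h 1 0 ^ 2 + h 1 1 ^ 2), ?_⟩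
    rintro y ⟨z, hz, rfl⟩
    simp only [Set.mem_setOf_eq] at hz
    have hz2 : z 0 ^ 2 + z 1 ^ 2 = 1 := by rw [← en2_sq, hz]; norm_num
    unfold en
    apply Real.sqrt_le_sqrt
    rw [Fin.sum_univ_two, mulVec2, mulVec2]
    nlinarith [sq_nonneg (h 0 0 * z 1 - h 0 1 * z 0), sq_nonneg (h 1 0 * z 1 - h 1 1 * z 0)]
  · exact ⟨x, hx, rfl⟩

set_option maxHeartbeats 2000000 in
lemma key_orth (h : Matrix (Fin 2) (Fin 2) ℝ) (u : Fin 2 → ℝ) (hu : en u = 1)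
    (humax : en (h.mulVec u) = opn h) (q : Fin 2 → ℝ) (hq : en q = 1)
    (horth : ip q u = 0) : ip (h.mulVec u) (h.mulVec q) = 0 := by
  set β := ip (h.mulVec u) (h.mulVec q) with hβdef
  by_contra hβ
  set σ := en (h.mulVec u) with hσdef
  have hσ0 : 0 ≤ σ := en_nonneg _
  set A := ip (h.mulVec q) (h.mulVec q) with hAdef
  have hA : A ≤ σ ^ 2 := by
    have h1 := opn_ub h q hq
    rw [← humax] at h1
    have h2 : en (h.mulVec q) ^ 2 ≤ σ ^ 2 := by nlinarith [en_nonneg (h.mulVec q)]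
    rw [en_sq] at h2; exact h2
  set D := σ ^ 2 - A with hD
  have hD0 : 0 ≤ D := by linarith
  have hβ0 : 0 < |β| := abs_pos.2 hβ
  set t := min (1 / 2 : ℝ) (|β| / (D + 1)) with ht
  have ht0 : 0 < t := lt_min (by norm_num) (div_pos hβ0 (by linarith))
  have ht2 : t ≤ 1 / 2 := min_le_left _ _
  have htD : t * D < |β| := by
    have h1 : t * D ≤ |β| / (D + 1) * D :=
      mul_le_mul_of_nonneg_right (min_le_right _ _) hD0
    have h2 : |β| / (D + 1) * D < |β| := by
      rw [div_mul_eq_mul_div, div_lt_iff₀ (by linarith)]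
      nlinarith
    exact lt_of_le_of_lt h1 h2
  set c := Real.sqrt (1 - t ^ 2) with hc
  have hc2 : c ^ 2 = 1 - t ^ 2 := Real.sq_sqrt (by nlinarith)
  have hchalf : 1 / 2 ≤ c := by
    have h1 : Real.sqrt ((1:ℝ) / 4) ≤ Real.sqrt (1 - t ^ 2) := Real.sqrt_le_sqrt (by nlinarith)
    have h2 : Real.sqrt ((1:ℝ) / 4) = 1 / 2 := by
      rw [show (1 / 4 : ℝ) = (1 / 2) ^ 2 by norm_num, Real.sqrt_sq (by norm_num)]
    rw [h2] at h1; exact h1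
  set s := if 0 ≤ β then t else -t with hs
  have hs2 : s ^ 2 = t ^ 2 := by
    by_cases h' : 0 ≤ β
    · rw [hs, if_pos h']
    · rw [hs, if_neg h']; ring
  have hsβ : s * β = t * |β| := by
    by_cases h' : 0 ≤ β
    · rw [hs, if_pos h', abs_of_nonneg h']
    · rw [hs, if_neg h', abs_of_neg (lt_of_not_ge h')]; ring
  set x := c • u + s • q with hx
  have huu : ip u u = 1 := by rw [← en_sq, hu]; norm_num
  have hqq : ip q q = 1 := by rw [← en_sq, hq]; norm_num
  have hipx : ip x x = 1 := by
    rw [hx, ip_add_left, ip_smul_left, ip_smul_left, ip_add_right, ip_add_right,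
      ip_smul_right, ip_smul_right, ip_smul_right, ip_smul_right, huu, hqq,
      ip_comm u q, horth]
    nlinarith
  have hxunit : en x = 1 := by rw [en_eq, hipx, Real.sqrt_one]
  have hle := opn_ub h x hxunit
  rw [← humax] at hle
  have hle2 : ip (h.mulVec x) (h.mulVec x) ≤ σ ^ 2 := by
    rw [← en_sq]; nlinarith [en_nonneg (h.mulVec x)]
  have hmx : h.mulVec x = c • h.mulVec u + s • h.mulVec q := by
    rw [hx, Matrix.mulVec_add, Matrix.mulVec_smul, Matrix.mulVec_smul]
  have hexp : ip (h.mulVec x) (h.mulVec x)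
      = c ^ 2 * σ ^ 2 + 2 * (c * s) * β + s ^ 2 * A := by
    rw [hmx, ip_add_left, ip_smul_left, ip_smul_left, ip_add_right, ip_add_right,
      ip_smul_right, ip_smul_right, ip_smul_right, ip_smul_right]
    rw [ip_comm (h.mulVec q) (h.mulVec u), ← hβdef, ← hAdef,
      show ip (h.mulVec u) (h.mulVec u) = σ ^ 2 by rw [hσdef, en_sq]]
    ring
  have hcsβ : 2 * (c * s) * β = 2 * c * (t * |β|) := by
    rw [show 2 * (c * s) * β = 2 * c * (s * β) by ring, hsβ]
  have e0 : c ^ 2 * σ ^ 2 = σ ^ 2 - t ^ 2 * σ ^ 2 := by rw [hc2]; ring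
  have e0' : s ^ 2 * A = t ^ 2 * A := by rw [hs2]
  have e2 : t ^ 2 * D = t ^ 2 * σ ^ 2 - t ^ 2 * A := by rw [hD]; ring
  have e1 : 2 * (c * s) * β ≤ t ^ 2 * D := by linarith [hle2, hexp]
  have htβ0 : 0 ≤ t * |β| := le_of_lt (mul_pos ht0 hβ0)
  have h2c : (1:ℝ) ≤ 2 * c := by linarith
  have e3 : t * |β| ≤ 2 * c * (t * |β|) := by
    have := mul_le_mul_of_nonneg_right h2c htβ0
    linarith
  have e4 : t * (t * D) < t * |β| := mul_lt_mul_of_pos_left htD ht0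
  nlinarith [e1, e3, e4, hcsβ]

lemma key_lower (h : Matrix (Fin 2) (Fin 2) ℝ) (u : Fin 2 → ℝ) (hu : en u = 1)
    (humax : en (h.mulVec u) = opn h) (p : Fin 2 → ℝ) :
    en (h.mulVec u) * |ip p u| ≤ en (h.mulVec p) := by
  set σ := en (h.mulVec u) with hσdef
  have hσ0 : 0 ≤ σ := en_nonneg _
  set t := ip p u with htdef
  set q := p - t • u with hqdef
  have huu : ip u u = 1 := by rw [← en_sq, hu]; norm_num
  have horth : ip q u = 0 := by
    rw [hqdef, ip_sub_left, ip_smul_left, huu, ← htdef]; ring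
  have hβ : ip (h.mulVec u) (h.mulVec q) = 0 := by
    by_cases hq0 : q = 0
    · rw [hq0, Matrix.mulVec_zero, ip_zero_right]
    · have hr : 0 < en q := en_pos hq0
      have hq1 : en ((en q)⁻¹ • q) = 1 := by
        rw [en_smul, abs_of_pos (inv_pos.2 hr), inv_mul_cancel₀ (ne_of_gt hr)]
      have ho1 : ip ((en q)⁻¹ • q) u = 0 := by rw [ip_smul_left, horth]; ring
      have h0 := key_orth h u hu humax _ hq1 ho1
      rw [Matrix.mulVec_smul, ip_smul_right] at h0
      rcases mul_eq_zero.1 h0 with h' | h'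
      · exact absurd h' (inv_ne_zero (ne_of_gt hr))
      · exact h'
  have hp : p = q + t • u := by rw [hqdef]; ring_nf
  have hmp : h.mulVec p = h.mulVec q + t • h.mulVec u := by
    rw [hp, Matrix.mulVec_add, Matrix.mulVec_smul]
  have hexp : ip (h.mulVec p) (h.mulVec p)
      = ip (h.mulVec q) (h.mulVec q) + t ^ 2 * σ ^ 2 := by
    rw [hmp, ip_add_left, ip_add_right, ip_add_right, ip_smul_left, ip_smul_left,
      ip_smul_right, ip_smul_right]
    rw [ip_comm (h.mulVec q) (h.mulVec u), hβ,
      show ip (h.mulVec u) (h.mulVec u) = σ ^ 2 by rw [hσdef, en_sq]]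
    ring
  have h1 : (σ * |t|) ^ 2 ≤ ip (h.mulVec p) (h.mulVec p) := by
    rw [hexp]
    have h2 : (σ * |t|) ^ 2 = t ^ 2 * σ ^ 2 := by rw [mul_pow, sq_abs]; ring
    linarith [ip_self_nonneg (h.mulVec q)]
  calc σ * |t| = Real.sqrt ((σ * |t|) ^ 2) := (Real.sqrt_sq (by positivity)).symm
    _ ≤ Real.sqrt (ip (h.mulVec p) (h.mulVec p)) := Real.sqrt_le_sqrt h1
    _ = en (h.mulVec p) := (en_eq _).symm

lemma image_eq (h : Matrix (Fin 2) (Fin 2) ℝ) (hinv : h * h⁻¹ = 1) (nv : Fin 2 → ℝ)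
    (v : Fin 3 → ℝ) :
    (fun i : Fin 2 => (Lmat h nv).mulVec v i.succ)
      = h.mulVec (fun i => v i.succ + v 0 * h⁻¹.mulVec nv i) := by
  have hm : h.mulVec (h⁻¹.mulVec nv) = nv := by
    rw [Matrix.mulVec_mulVec, hinv, Matrix.one_mulVec]
  set mv := h⁻¹.mulVec nv with hmv
  have hm0 := congr_fun hm 0
  have hm1 := congr_fun hm 1
  rw [mulVec2] at hm0 hm1
  funext i
  fin_cases i <;>
    simp [Lmat, Matrix.mulVec, dotProduct, Fin.sum_univ_two, Fin.sum_univ_three] <;>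
    [linear_combination (-(v 0)) * hm0; linear_combination (-(v 0)) * hm1]

lemma Lmat_inv (h : Matrix (Fin 2) (Fin 2) ℝ) (hd : h.det = 1 ∨ h.det = -1)
    (nv : Fin 2 → ℝ) :
    (Lmat h nv)⁻¹ = !![h.det, 0, 0;
        -h.det * h⁻¹.mulVec nv 0, h⁻¹ 0 0, h⁻¹ 0 1;
        -h.det * h⁻¹.mulVec nv 1, h⁻¹ 1 0, h⁻¹ 1 1] := by
  have hd2 : h.det ^ 2 = 1 := by rcases hd with hd | hd <;> rw [hd] <;> norm_num
  have hdu : IsUnit h.det :=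
    isUnit_iff_ne_zero.2 (by rcases hd with hd | hd <;> rw [hd] <;> norm_num)
  have hinv : h * h⁻¹ = 1 := Matrix.mul_nonsing_inv h hdu
  have hm : h.mulVec (h⁻¹.mulVec nv) = nv := by
    rw [Matrix.mulVec_mulVec, hinv, Matrix.one_mulVec]
  set mv := h⁻¹.mulVec nv with hmv
  have hm0 := congr_fun hm 0
  have hm1 := congr_fun hm 1
  rw [mulVec2] at hm0 hm1
  have e00 := congr_fun (congr_fun hinv 0) 0
  have e01 := congr_fun (congr_fun hinv 0) 1
  have e10 := congr_fun (congr_fun hinv 1) 0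
  have e11 := congr_fun (congr_fun hinv 1) 1
  simp [Matrix.mul_apply, Fin.sum_univ_two, Matrix.one_apply] at e00 e01 e10 e11
  apply Matrix.inv_eq_right_inv
  ext i j
  fin_cases i <;> fin_cases j <;>
    simp [Lmat, Matrix.mul_apply, Fin.sum_univ_three, Matrix.one_apply]
  · linear_combination hd2
  · linear_combination (-(h.det)) * hm0
  · linear_combination e00
  · linear_combination e01
  · linear_combination (-(h.det)) * hm1
  · linear_combination e10
  · linear_combination e11

lemma Lmat_inv_e1 (h : Matrix (Fin 2) (Fin 2) ℝ) (hd : h.det = 1 ∨ h.det = -1)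
    (nv : Fin 2 → ℝ) :
    (Lmat h nv)⁻¹.mulVec ![1, 0, 0]
      = ![h.det, -h.det * h⁻¹.mulVec nv 0, -h.det * h⁻¹.mulVec nv 1] := by
  rw [Lmat_inv h hd nv]
  funext j
  fin_cases j <;>
    simp [Matrix.mulVec, dotProduct, Fin.sum_univ_three]

lemma pd2 (a b : Fin 2 → ℝ) :
    pd a b = |a 0 * b 1 - a 1 * b 0| / (en a * en b) := by
  unfold pd
  rw [show en a ^ 2 * en b ^ 2 - ip a b ^ 2 = (a 0 * b 1 - a 1 * b 0) ^ 2 by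
    rw [en2_sq, en2_sq, ip2]; ring, Real.sqrt_sq_eq_abs]

lemma pd3 (v w : Fin 3 → ℝ) :
    pd v w = Real.sqrt ((v 1 * w 2 - v 2 * w 1) ^ 2 + (v 2 * w 0 - v 0 * w 2) ^ 2
        + (v 0 * w 1 - v 1 * w 0) ^ 2) / (en v * en w) := by
  unfold pd
  rw [show en v ^ 2 * en w ^ 2 - ip v w ^ 2 = (v 1 * w 2 - v 2 * w 1) ^ 2
      + (v 2 * w 0 - v 0 * w 2) ^ 2 + (v 0 * w 1 - v 1 * w 0) ^ 2 by
    rw [en3_sq, en3_sq, ip3]; ring]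

lemma cross2_mulVec (h : Matrix (Fin 2) (Fin 2) ℝ) (a b : Fin 2 → ℝ) :
    h.mulVec a 0 * h.mulVec b 1 - h.mulVec a 1 * h.mulVec b 0
      = h.det * (a 0 * b 1 - a 1 * b 0) := by
  rw [mulVec2, mulVec2, mulVec2, mulVec2, Matrix.det_fin_two]; ring

lemma cs3 (c0 c1 c2 m0 m1 : ℝ) :
    (c0 - m0 * c1 - m1 * c2) ^ 2 ≤ (1 + m0 ^ 2 + m1 ^ 2) * (c0 ^ 2 + c1 ^ 2 + c2 ^ 2) := by
  nlinarith [sq_nonneg (m0 * c0 + c1), sq_nonneg (m1 * c0 + c2), sq_nonneg (m0 * c2 - m1 * c1)]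

lemma aux_pos {b C σ e : ℝ} (h : σ * e ≤ C * b) (hσ : 0 < σ) (he : 0 < e)
    (hC : 0 < C) : 0 < b := by nlinarith

lemma aux_final {X σ ev ev' w w' C₁ C₂ S : ℝ}
    (hX : X ≤ C₁ * S) (hw : σ * ev ≤ C₂ * w) (hw' : σ * ev' ≤ C₂ * w')
    (hσ0 : 0 ≤ σ) (hev : 0 ≤ ev) (hev' : 0 ≤ ev') (hw0 : 0 ≤ w) (hw0' : 0 ≤ w')
    (hC₁ : 0 ≤ C₁) (hC₂0 : 0 ≤ C₂) (hS : 0 ≤ S) :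
    X * σ ^ 2 * (ev * ev') ≤ 2 * C₁ * C₂ ^ 2 * S * (w * w') := by
  have f1 : (σ * ev) * (σ * ev') ≤ (C₂ * w) * (C₂ * w') :=
    mul_le_mul hw hw' (mul_nonneg hσ0 hev') (mul_nonneg hC₂0 hw0)
  have hC₁S : 0 ≤ C₁ * S := mul_nonneg hC₁ hS
  nlinarith [mul_le_mul_of_nonneg_right hX (mul_nonneg (mul_nonneg hev hev') (sq_nonneg σ)),
    mul_le_mul_of_nonneg_left f1 hC₁S,
    mul_nonneg (mul_nonneg hC₁S (mul_nonneg hC₂0 hC₂0)) (mul_nonneg hw0 hw0')]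

set_option maxHeartbeats 2000000 in
theorem attracting_region_contraction
    (C₁ C₂ : ℝ) (hC₁ : 2 < C₁) (hC₂ : 2 < C₂)
    (h : Matrix (Fin 2) (Fin 2) ℝ) (hdet : h.det = 1 ∨ h.det = -1)
    (nv : Fin 2 → ℝ)
    -- `u` is a unit vector realizing the operator norm of `h`; `f_h = ⟨·, u⟩`
    (u : Fin 2 → ℝ) (hu : en u = 1) (humax : en (h.mulVec u) = opn h)
    -- `d(ℓ⁻¹E₁, E₁^⊥) > 1/C₁`
    (hdist : 1 / C₁ <
      |((Lmat h nv)⁻¹.mulVec ![1, 0, 0]) 0| / en ((Lmat h nv)⁻¹.mulVec ![1, 0, 0])) :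
    (∀ v : Fin 3 → ℝ, en v = 1 →
        flnorm h nv u / C₂ ≤ |flform h nv u v| →
        opn h / C₂ ≤ en (fun i : Fin 2 => (Lmat h nv).mulVec v i.succ)) ∧
      (∀ v v' : Fin 3 → ℝ, v ≠ 0 → v' ≠ 0 →
        flnorm h nv u * en v / C₂ ≤ |flform h nv u v| →
        flnorm h nv u * en v' / C₂ ≤ |flform h nv u v'| →
        pd v v' ≠ 0 →
        pd (fun i : Fin 2 => (Lmat h nv).mulVec v i.succ)
              (fun i : Fin 2 => (Lmat h nv).mulVec v' i.succ) / pd v v'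
          ≤ 2 * C₁ * C₂ ^ 2 / opn h ^ 2) := by
    have hC₂0 : (0:ℝ) < C₂ := by linarith
    have hC₁0 : (0:ℝ) < C₁ := by linarith
    have hd2 : h.det ^ 2 = 1 := by rcases hdet with hd | hd <;> rw [hd] <;> norm_num
    have hdu : IsUnit h.det :=
      isUnit_iff_ne_zero.2 (by rcases hdet with hd | hd <;> rw [hd] <;> norm_num)
    have hinv : h * h⁻¹ = 1 := Matrix.mul_nonsing_inv h hdu
    have hinv' : h⁻¹ * h = 1 := Matrix.nonsing_inv_mul h hdu
    have hσ0 : 0 ≤ en (h.mulVec u) := en_nonneg _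
    have hu0 : u ≠ 0 := by
      intro h0; rw [h0] at hu; simp [en] at hu
    have hmu0 : h.mulVec u ≠ 0 := by
      intro h0
      apply hu0
      have huu : u = (h⁻¹ * h).mulVec u := by rw [hinv', Matrix.one_mulVec]
      rw [← Matrix.mulVec_mulVec, h0, Matrix.mulVec_zero] at huu
      exact huu
    have hσpos : 0 < en (h.mulVec u) := en_pos hmu0
    have hfl1 : 1 ≤ flnorm h nv u := by
      have h1 : Real.sqrt 1 ≤ Real.sqrt (1 + ip (h⁻¹.mulVec nv) u ^ 2) :=
        Real.sqrt_le_sqrt (by nlinarith [sq_nonneg (ip (h⁻¹.mulVec nv) u)])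
      rwa [Real.sqrt_one] at h1
    set E := Real.sqrt (1 + h⁻¹.mulVec nv 0 ^ 2 + h⁻¹.mulVec nv 1 ^ 2) with hE
    have hE2 : E ^ 2 = 1 + h⁻¹.mulVec nv 0 ^ 2 + h⁻¹.mulVec nv 1 ^ 2 :=
      Real.sq_sqrt (by positivity)
    have hEC₁ : E < C₁ := by
      rw [Lmat_inv_e1 h hdet nv] at hdist
      have hzen : en (![h.det, -h.det * h⁻¹.mulVec nv 0, -h.det * h⁻¹.mulVec nv 1] :
          Fin 3 → ℝ) = E := by
        rw [hE]; unfold en; rw [Fin.sum_univ_three]; congr 1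
        simp only [Matrix.cons_val_zero, Matrix.cons_val_one, Matrix.head_cons,
          Matrix.cons_val_two, Matrix.tail_cons]
        linear_combination (1 + h⁻¹.mulVec nv 0 ^ 2 + h⁻¹.mulVec nv 1 ^ 2) * hd2
      have hz0 : |(![h.det, -h.det * h⁻¹.mulVec nv 0, -h.det * h⁻¹.mulVec nv 1] :
          Fin 3 → ℝ) 0| = 1 := by
        show |h.det| = 1
        rcases hdet with hd | hd <;> rw [hd] <;> norm_num
      rw [hzen, hz0] at hdist
      have hE0 : 0 < E := Real.sqrt_pos.2 (by positivity)
      rw [div_lt_div_iff₀ hC₁0 hE0] at hdist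
      linarith
    have hE0 : (0:ℝ) ≤ E := Real.sqrt_nonneg _
    clear_value E
    constructor
    · intro v hv hform
      rw [image_eq h hinv nv v]
      have hkl := key_lower h u hu humax (fun i => v i.succ + v 0 * h⁻¹.mulVec nv i)
      have hfeq : flform h nv u v = ip (fun i => v i.succ + v 0 * h⁻¹.mulVec nv i) u := rfl
      have h1C : 1 / C₂ ≤ |flform h nv u v| :=
        le_trans ((div_le_div_iff_of_pos_right hC₂0).2 hfl1) hform
      calc opn h / C₂ = en (h.mulVec u) * (1 / C₂) := by rw [← humax]; ring
        _ ≤ en (h.mulVec u) * |flform h nv u v| := mul_le_mul_of_nonneg_left h1C hσ0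
        _ = en (h.mulVec u) * |ip (fun i => v i.succ + v 0 * h⁻¹.mulVec nv i) u| := by
            rw [hfeq]
        _ ≤ en (h.mulVec fun i => v i.succ + v 0 * h⁻¹.mulVec nv i) := hkl
    · intro v v' hv0 hv'0 hf hf' hpdne
      set p := fun i : Fin 2 => v i.succ + v 0 * h⁻¹.mulVec nv i with hpdef
      set p' := fun i : Fin 2 => v' i.succ + v' 0 * h⁻¹.mulVec nv i with hp'def
      rw [image_eq h hinv nv v, image_eq h hinv nv v', ← hpdef, ← hp'def]
      have henv : 0 < en v := en_pos hv0
      have henv' : 0 < en v' := en_pos hv'0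
      have hkl := key_lower h u hu humax p
      have hkl' := key_lower h u hu humax p'
      have hfeq : flform h nv u v = ip p u := rfl
      have hfeq' : flform h nv u v' = ip p' u := rfl
      have hf2 : en v / C₂ ≤ |ip p u| := by
        rw [← hfeq]
        exact le_trans ((div_le_div_iff_of_pos_right hC₂0).2
          (le_mul_of_one_le_left (en_nonneg v) hfl1)) hf
      have hf2' : en v' / C₂ ≤ |ip p' u| := by
        rw [← hfeq']
        exact le_trans ((div_le_div_iff_of_pos_right hC₂0).2
          (le_mul_of_one_le_left (en_nonneg v') hfl1)) hf'
      have hg2 : en v ≤ |ip p u| * C₂ := (div_le_iff₀ hC₂0).1 hf2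
      have hg2' : en v' ≤ |ip p' u| * C₂ := (div_le_iff₀ hC₂0).1 hf2'
      have hw : en (h.mulVec u) * en v ≤ C₂ * en (h.mulVec p) := by
        calc en (h.mulVec u) * en v ≤ en (h.mulVec u) * (|ip p u| * C₂) :=
              mul_le_mul_of_nonneg_left hg2 hσ0
          _ = (en (h.mulVec u) * |ip p u|) * C₂ := by ring
          _ ≤ en (h.mulVec p) * C₂ := mul_le_mul_of_nonneg_right hkl (le_of_lt hC₂0)
          _ = C₂ * en (h.mulVec p) := by ring
      have hw' : en (h.mulVec u) * en v' ≤ C₂ * en (h.mulVec p') := by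
        calc en (h.mulVec u) * en v' ≤ en (h.mulVec u) * (|ip p' u| * C₂) :=
              mul_le_mul_of_nonneg_left hg2' hσ0
          _ = (en (h.mulVec u) * |ip p' u|) * C₂ := by ring
          _ ≤ en (h.mulVec p') * C₂ := mul_le_mul_of_nonneg_right hkl' (le_of_lt hC₂0)
          _ = C₂ * en (h.mulVec p') := by ring
      have hwpos : 0 < en (h.mulVec p) := aux_pos hw hσpos henv hC₂0
      have hw'pos : 0 < en (h.mulVec p') := aux_pos hw' hσpos henv' hC₂0
      set S := Real.sqrt ((v 1 * v' 2 - v 2 * v' 1) ^ 2 + (v 2 * v' 0 - v 0 * v' 2) ^ 2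
        + (v 0 * v' 1 - v 1 * v' 0) ^ 2) with hS
      have hS0 : 0 ≤ S := Real.sqrt_nonneg _
      have hS2 : S ^ 2 = (v 1 * v' 2 - v 2 * v' 1) ^ 2 + (v 2 * v' 0 - v 0 * v' 2) ^ 2
          + (v 0 * v' 1 - v 1 * v' 0) ^ 2 := Real.sq_sqrt (by positivity)
      have hpdv : pd v v' = S / (en v * en v') := pd3 v v'
      have hSpos : 0 < S := by
        rcases lt_or_eq_of_le hS0 with h' | h'
        · exact h'
        · exact absurd (by rw [hpdv, ← h', zero_div]) hpdne
      have hcr : p 0 * p' 1 - p 1 * p' 0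
          = (v 1 * v' 2 - v 2 * v' 1) - h⁻¹.mulVec nv 0 * (v 2 * v' 0 - v 0 * v' 2)
            - h⁻¹.mulVec nv 1 * (v 0 * v' 1 - v 1 * v' 0) := by
        simp only [hpdef, hp'def]
        simp only [Fin.succ_zero_eq_one, Fin.succ_one_eq_two]
        ring
      clear_value S
      clear_value p p'
      have hXbound : |p 0 * p' 1 - p 1 * p' 0| ≤ C₁ * S := by
        have hcs := cs3 (v 1 * v' 2 - v 2 * v' 1) (v 2 * v' 0 - v 0 * v' 2)
          (v 0 * v' 1 - v 1 * v' 0) (h⁻¹.mulVec nv 0) (h⁻¹.mulVec nv 1)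
        have h1 : (p 0 * p' 1 - p 1 * p' 0) ^ 2 ≤ E ^ 2 * S ^ 2 := by
          rw [hcr, hE2, hS2]; exact hcs
        have h2 : |p 0 * p' 1 - p 1 * p' 0| ≤ E * S := by
          calc |p 0 * p' 1 - p 1 * p' 0|
              = Real.sqrt ((p 0 * p' 1 - p 1 * p' 0) ^ 2) := (Real.sqrt_sq_eq_abs _).symm
            _ ≤ Real.sqrt (E ^ 2 * S ^ 2) := Real.sqrt_le_sqrt h1
            _ = E * S := by
                rw [show E ^ 2 * S ^ 2 = (E * S) ^ 2 by ring,
                  Real.sqrt_sq (mul_nonneg hE0 hS0)]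
        exact le_trans h2 (mul_le_mul_of_nonneg_right (le_of_lt hEC₁) hS0)
      rw [pd2, cross2_mulVec]
      have habs : |h.det * (p 0 * p' 1 - p 1 * p' 0)| = |p 0 * p' 1 - p 1 * p' 0| := by
        rw [abs_mul, show |h.det| = 1 by rcases hdet with hd | hd <;> rw [hd] <;> norm_num,
          one_mul]
      rw [habs, hpdv, ← humax]
      rw [div_le_div_iff₀ (div_pos hSpos (mul_pos henv henv')) (pow_pos hσpos 2)]
      rw [div_mul_eq_mul_div, ← mul_div_assoc,
        div_le_div_iff₀ (mul_pos hwpos hw'pos) (mul_pos henv henv')]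
      exact aux_final hXbound hw hw' hσ0 (le_of_lt henv) (le_of_lt henv')
        (le_of_lt hwpos) (le_of_lt hw'pos) (le_of_lt hC₁0) (le_of_lt hC₂0) hS0

end
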